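/- arXiv:2006.01572 — 2 statements merged into one kernel-verified Lean document; each statement's English description precedes it below -/
import Mathlib

section
/- Let ∈ ℝ^{(d+1)×(d+1)} be a symmetric matrix written in block form = [[A, b],[bᵀ, c]] with A ∈ ℝ^{d×d} symmetric positive semidefinite, b ∈ ℝ^d and c ∈ ℝ. Then is positive semidefinite if and only if (Id − A A†) b = 0 and the Schur complement satisfies c − ⟨A† b, b⟩ ≥ 0. -/
open Matrix

/-- `B` is the Moore-Penrose pseudoinverse of `A` (Penrose characterization). -/
def IsMoorePenroseInverse {d m : ℕ} (A : Matrix (Fin d) (Fin m) ℝ)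
    (B : Matrix (Fin m) (Fin d) ℝ) : Prop :=
  A * B * A = A ∧ B * A * B = B ∧ (A * B)ᵀ = A * B ∧ (B * A)ᵀ = B * A

open Classical in
/-- The Moore-Penrose pseudoinverse `A†` of a real matrix. -/
noncomputable def moorePenrose {d m : ℕ} (A : Matrix (Fin d) (Fin m) ℝ) :
    Matrix (Fin m) (Fin d) ℝ :=
  if h : ∃ B, IsMoorePenroseInverse A B then h.choose else 0

/-- The symmetric block matrix `Â = [[A, b], [bᵀ, c]]`. -/
def hatMatrix {d : ℕ} (A : Matrix (Fin d) (Fin d) ℝ) (b : Fin d → ℝ) (c : ℝ) :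
    Matrix (Fin d ⊕ Unit) (Fin d ⊕ Unit) ℝ :=
  Matrix.fromBlocks A (Matrix.of fun i _ => b i) (Matrix.of fun _ j => b j)
    (Matrix.of fun _ _ => c)

/-!
The pseudoinverse of a symmetric matrix `A` is the functional calculus of `x ↦ x⁻¹` at `A`.
Write `q(u, t) = ⟨u, A u⟩ + 2 t ⟨b, u⟩ + c t²` for the quadratic form of `Â`. If `A v = b`
(for `v = A† b` this is `(1 - A A†) b = 0`), completing the square gives
`q(u, t) = ⟨u + t v, A (u + t v)⟩ + (c - ⟨v, b⟩) t²`, which yields the Schur condition in both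
directions. Conversely, if `q ≥ 0` then `q(u, t) = 2 t ⟨b, u⟩ + c t²` for `u ∈ ker A` forces
`b ⊥ ker A`; since `b - A A† b` lies in `ker A` and is orthogonal to the range of `A`, it vanishes.
-/

theorem Matrix.IsHermitian.exists_isMoorePenroseInverse {d : ℕ} {A : Matrix (Fin d) (Fin d) ℝ}
    (hA : A.IsHermitian) : ∃ B, IsMoorePenroseInverse A B := by
  have hcfc : ∀ f g : ℝ → ℝ, cfc f A * cfc g A = cfc (fun x => f x * g x) A := fun f g =>
    (cfc_mul f g A (A.finite_real_spectrum.continuousOn f)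
      (A.finite_real_spectrum.continuousOn g)).symm
  have hsymm : ∀ f : ℝ → ℝ, (cfc f A)ᵀ = cfc f A := fun f => by
    rw [← conjTranspose_eq_transpose_of_trivial]
    exact IsSelfAdjoint.cfc
  have hid : cfc id A = A := cfc_id ℝ A hA
  have hAB := hcfc id (·⁻¹)
  have hBA := hcfc (·⁻¹) id
  rw [hid] at hAB hBA
  refine ⟨cfc (·⁻¹ : ℝ → ℝ) A, ?_, ?_, ?_, ?_⟩
  · rw [hAB]
    nth_rw 2 [← hid]
    rw [hcfc]
    simp only [id, mul_inv_mul_cancel]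
    exact hid
  · rw [hBA, hcfc]
    congr 1
    funext x
    simpa using mul_inv_mul_cancel x⁻¹
  · rw [hAB, hsymm]
  · rw [hBA, hsymm]

theorem isMoorePenroseInverse_moorePenrose {d m : ℕ} {A : Matrix (Fin d) (Fin m) ℝ}
    (h : ∃ B, IsMoorePenroseInverse A B) : IsMoorePenroseInverse A (moorePenrose A) := by
  rw [moorePenrose, dif_pos h]
  exact h.choose_spec

theorem IsMoorePenroseInverse.mul_mul_self_of_isSymm {d : ℕ} {A B : Matrix (Fin d) (Fin d) ℝ}
    (h : IsMoorePenroseInverse A B) (hA : A.IsSymm) : A * (A * B) = A := by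
  obtain ⟨hABA, -, hAB, -⟩ := h
  rw [← hAB]
  nth_rw 1 [← hA.eq]
  rw [← transpose_mul, hABA, hA.eq]

theorem Matrix.IsSymm.dotProduct_mulVec_comm {n : Type*} [Fintype n] {A : Matrix n n ℝ}
    (hA : A.IsSymm) (u v : n → ℝ) : u ⬝ᵥ A *ᵥ v = v ⬝ᵥ A *ᵥ u := by
  rw [dotProduct_mulVec, ← mulVec_transpose, hA.eq, dotProduct_comm]

theorem Matrix.IsSymm.complete_square {n : Type*} [Fintype n] {A : Matrix n n ℝ}
    (hA : A.IsSymm) {v b : n → ℝ} (hv : A *ᵥ v = b) (c : ℝ) (u : n → ℝ) (t : ℝ) :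
    u ⬝ᵥ A *ᵥ u + 2 * t * (b ⬝ᵥ u) + c * t ^ 2 =
      (u + t • v) ⬝ᵥ A *ᵥ (u + t • v) + (c - v ⬝ᵥ b) * t ^ 2 := by
  have hvu : v ⬝ᵥ A *ᵥ u = b ⬝ᵥ u := by rw [hA.dotProduct_mulVec_comm, hv, dotProduct_comm]
  simp only [mulVec_add, mulVec_smul, add_dotProduct, dotProduct_add, smul_dotProduct,
    dotProduct_smul, hvu, hv, smul_eq_mul, dotProduct_comm u b]
  ring

theorem hatMatrix_dotProduct_mulVec {d : ℕ} (A : Matrix (Fin d) (Fin d) ℝ) (b : Fin d → ℝ)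
    (c : ℝ) (u : Fin d → ℝ) (t : ℝ) :
    (u ⊕ᵥ fun _ => t) ⬝ᵥ hatMatrix A b c *ᵥ (u ⊕ᵥ fun _ => t) =
      u ⬝ᵥ A *ᵥ u + 2 * t * (b ⬝ᵥ u) + c * t ^ 2 := by
  have hcol : (of fun i (_ : Unit) => b i) *ᵥ (fun _ => t) = t • b := by
    ext
    simp [mulVec, dotProduct, mul_comm]
  have hrow : (of fun (_ : Unit) j => b j) *ᵥ u = fun _ => b ⬝ᵥ u := rfl
  have hcorner : (of fun (_ : Unit) (_ : Unit) => c) *ᵥ (fun _ => t) = fun _ => c * t := by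
    ext
    simp [mulVec, dotProduct]
  rw [hatMatrix, fromBlocks_mulVec, Sum.elim_comp_inl, Sum.elim_comp_inr, hcol, hrow, hcorner,
    sumElim_dotProduct_sumElim]
  simp only [dotProduct_add, dotProduct_smul, dotProduct_comm u b, smul_eq_mul, dotProduct_pUnit]
  ring

theorem isHermitian_hatMatrix {d : ℕ} {A : Matrix (Fin d) (Fin d) ℝ} (hA : A.IsHermitian)
    (b : Fin d → ℝ) (c : ℝ) : (hatMatrix A b c).IsHermitian :=
  hA.fromBlocks (by ext; simp) (by ext; simp)

theorem posSemidef_hatMatrix_iff {d : ℕ} {A : Matrix (Fin d) (Fin d) ℝ} (hA : A.IsHermitian)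
    (b : Fin d → ℝ) (c : ℝ) :
    (hatMatrix A b c).PosSemidef ↔ ∀ u t, 0 ≤ u ⬝ᵥ A *ᵥ u + 2 * t * (b ⬝ᵥ u) + c * t ^ 2 := by
  simp only [posSemidef_iff_dotProduct_mulVec, isHermitian_hatMatrix hA, star_trivial,
    true_and, ← hatMatrix_dotProduct_mulVec]
  refine ⟨fun h u t => h _, fun h x => ?_⟩
  have hx : x = (x ∘ Sum.inl) ⊕ᵥ fun _ => x (Sum.inr ()) := by
    ext (i | _) <;> rfl
  rw [hx]
  exact h _ _

theorem eq_zero_of_forall_two_mul_add_mul_sq_nonneg {a c : ℝ}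
    (h : ∀ t : ℝ, 0 ≤ 2 * t * a + c * t ^ 2) : a = 0 := by
  have hdiscrim := discrim_le_zero (K := ℝ) (a := c) (b := 2 * a) (c := 0) fun t => by
    linarith [h t]
  rw [discrim] at hdiscrim
  nlinarith [sq_nonneg a]

theorem dotProduct_eq_zero_of_posSemidef_hatMatrix {d : ℕ} {A : Matrix (Fin d) (Fin d) ℝ}
    {b : Fin d → ℝ} {c : ℝ} (h : (hatMatrix A b c).PosSemidef) {u : Fin d → ℝ}
    (hu : A *ᵥ u = 0) : b ⬝ᵥ u = 0 :=
  eq_zero_of_forall_two_mul_add_mul_sq_nonneg fun t => by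
    simpa [hatMatrix_dotProduct_mulVec, hu] using h.dotProduct_mulVec_nonneg (u ⊕ᵥ fun _ => t)

theorem IsMoorePenroseInverse.mulVec_mulVec_eq_of_posSemidef_hatMatrix {d : ℕ}
    {A B : Matrix (Fin d) (Fin d) ℝ} (hB : IsMoorePenroseInverse A B) (hA : A.IsSymm)
    {b : Fin d → ℝ} {c : ℝ} (h : (hatMatrix A b c).PosSemidef) : A *ᵥ (B *ᵥ b) = b := by
  set r := b - A *ᵥ (B *ᵥ b)
  have hAr : A *ᵥ r = 0 := by
    rw [mulVec_sub, mulVec_mulVec, mulVec_mulVec, Matrix.mul_assoc,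
      hB.mul_mul_self_of_isSymm hA, sub_self]
  have hrr : r ⬝ᵥ r = 0 :=
    calc r ⬝ᵥ r = (b - A *ᵥ (B *ᵥ b)) ⬝ᵥ r := rfl
      _ = b ⬝ᵥ r - B *ᵥ b ⬝ᵥ A *ᵥ r := by
          rw [sub_dotProduct, dotProduct_comm (A *ᵥ _), hA.dotProduct_mulVec_comm]
      _ = 0 := by
          rw [dotProduct_eq_zero_of_posSemidef_hatMatrix h hAr, hAr, dotProduct_zero, sub_zero]
  exact (sub_eq_zero.1 (dotProduct_self_eq_zero.1 hrr)).symm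

/-- `Â = [[A, b],[bᵀ, c]]` with `A` symmetric positive semidefinite is positive semidefinite
iff `(Id − A A†) b = 0` and the Schur complement satisfies `c − ⟨A† b, b⟩ ≥ 0`. -/
theorem stmt5 {d : ℕ} (A : Matrix (Fin d) (Fin d) ℝ) (hA : A.PosSemidef)
    (b : Fin d → ℝ) (c : ℝ) :
    (hatMatrix A b c).PosSemidef ↔
      ((1 - A * moorePenrose A).mulVec b = 0 ∧
        0 ≤ c - (moorePenrose A).mulVec b ⬝ᵥ b) := by
  have hAs : A.IsSymm := isHermitian_iff_isSymm.1 hA.isHermitian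
  have hB := isMoorePenroseInverse_moorePenrose hA.isHermitian.exists_isMoorePenroseInverse
  have hq := posSemidef_hatMatrix_iff hA.isHermitian b c
  rw [sub_mulVec, one_mulVec, sub_eq_zero, ← mulVec_mulVec, eq_comm]
  constructor
  · intro h
    have hrange := hB.mulVec_mulVec_eq_of_posSemidef_hatMatrix hAs h
    have hschur := hq.1 h (-(moorePenrose A *ᵥ b)) 1
    rw [hAs.complete_square hrange] at hschur
    exact ⟨hrange, by simpa using hschur⟩
  · rintro ⟨hrange, hschur⟩
    refine hq.2 fun u t => ?_
    rw [hAs.complete_square hrange]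
    have hA_nonneg := hA.dotProduct_mulVec_nonneg (u + t • moorePenrose A *ᵥ b)
    rw [star_trivial] at hA_nonneg
    exact add_nonneg hA_nonneg (mul_nonneg hschur (sq_nonneg t))
end

section
/- Let A, B ∈ ℝ^{d×d} be symmetric positive semidefinite matrices and b ∈ ℝ^d. Then there exist symmetric positive semidefinite matrices Â, B̂ ∈ ℝ^{(d+1)×(d+1)} with upper-left d×d blocks equal to A and B respectively, and with Â_{i,d+1} + B̂_{i,d+1} = b_i for i = 1,...,d, if and only if the system Ax + By = b has a solution x, y ∈ ℝ^d. -/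
/-!
A positive semidefinite extension `M = [[A, c], [cᴴ, α]]` forces `c` into the range of `A`: if
`A u = 0`, the quadratic form of `M` vanishes at `(u, 0)`, hence `M (u, 0) = 0` and `cᴴ u = 0`;
so `c ⊥ ker A = (range A)ᗮ`. Conversely, if `c = A x` then `M = Pᴴ A P` with `P = [1 | x]` is
positive semidefinite. Thus the two extensions exist iff `b` is the sum of a vector in the range
of `A` and one in the range of `B`.
-/

open Matrix WithLp
open scoped ComplexOrder

namespace Matrix

variable {𝕜 : Type*} [RCLike 𝕜] {n m : Type*} [Fintype n] [Fintype m]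

theorem exists_mulVec_eq_of_forall_conjTranspose_mulVec_eq_zero (A : Matrix m n 𝕜) (c : m → 𝕜)
    (h : ∀ u, Aᴴ *ᵥ u = 0 → star u ⬝ᵥ c = 0) : ∃ x, A *ᵥ x = c := by
  classical
  have hc : toLp 2 c ∈ (LinearMap.ker (toEuclideanLin Aᴴ))ᗮ := by
    rw [Submodule.mem_orthogonal]
    intro u hu
    have hu' : Aᴴ *ᵥ ofLp u = 0 := congrArg ofLp hu
    rw [EuclideanSpace.inner_eq_star_dotProduct, dotProduct_comm]
    exact h _ hu'
  rw [toEuclideanLin_conjTranspose_eq_adjoint, LinearMap.orthogonal_ker,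
    LinearMap.adjoint_adjoint] at hc
  obtain ⟨x, hx⟩ := hc
  exact ⟨ofLp x, congrArg ofLp hx⟩

theorem PosSemidef.toBlocks₂₁_mulVec_eq_zero {M : Matrix (n ⊕ m) (n ⊕ m) 𝕜} (hM : M.PosSemidef)
    {u : n → 𝕜} (hu : M.toBlocks₁₁ *ᵥ u = 0) : M.toBlocks₂₁ *ᵥ u = 0 := by
  have hMu : M *ᵥ Sum.elim u (0 : m → 𝕜) = Sum.elim (0 : n → 𝕜) (M.toBlocks₂₁ *ᵥ u) := by
    rw [← fromBlocks_toBlocks M, fromBlocks_mulVec]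
    simp [hu]
  have hzero : star (Sum.elim u (0 : m → 𝕜)) ⬝ᵥ M *ᵥ Sum.elim u (0 : m → 𝕜) = 0 := by
    rw [hMu]; simp [dotProduct, Fintype.sum_sum_type]
  rw [hM.dotProduct_mulVec_zero_iff, hMu] at hzero
  exact congrArg (· ∘ Sum.inr) hzero

theorem PosSemidef.exists_toBlocks₁₁_mulVec_eq_col_toBlocks₁₂
    {M : Matrix (n ⊕ m) (n ⊕ m) 𝕜} (hM : M.PosSemidef) (j : m) :
    ∃ x, M.toBlocks₁₁ *ᵥ x = M.toBlocks₁₂.col j := by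
  have hherm := hM.isHermitian
  rw [← fromBlocks_toBlocks M, isHermitian_fromBlocks_iff] at hherm
  obtain ⟨h₁₁, h₁₂, -, -⟩ := hherm
  refine exists_mulVec_eq_of_forall_conjTranspose_mulVec_eq_zero _ _ fun u hu => ?_
  rw [h₁₁.eq] at hu
  have hCu := congrFun (hM.toBlocks₂₁_mulVec_eq_zero hu) j
  rw [← h₁₂] at hCu
  simpa [dotProduct, mulVec, mul_comm] using congrArg star hCu

theorem PosSemidef.fromBlocks_mul_mul [DecidableEq n] {A : Matrix n n 𝕜} (hA : A.PosSemidef)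
    (X : Matrix n m 𝕜) : (fromBlocks A (A * X) (Xᴴ * A) (Xᴴ * A * X)).PosSemidef := by
  have : fromBlocks A (A * X) (Xᴴ * A) (Xᴴ * A * X) = (fromCols 1 X)ᴴ * A * fromCols 1 X := by
    simp [conjTranspose_fromCols_eq_fromRows_conjTranspose, fromRows_mul, mul_fromCols,
      Matrix.mul_assoc]
  rw [this]
  exact hA.conjTranspose_mul_mul_same _

end Matrix

/-- Let `A, B ∈ ℝ^{d×d}` be symmetric positive semidefinite and `b ∈ ℝ^d`. There exist
positive semidefinite `(d+1)×(d+1)` extensions `Â, B̂` of `A, B` whose last-column entries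
sum to `b` iff `Ax + By = b` has a solution. -/
theorem stmt8 {d : ℕ} (A B : Matrix (Fin d) (Fin d) ℝ) (hA : A.PosSemidef)
    (hB : B.PosSemidef) (b : Fin d → ℝ) :
    (∃ Ahat Bhat : Matrix (Fin d ⊕ Unit) (Fin d ⊕ Unit) ℝ,
        Ahat.PosSemidef ∧ Bhat.PosSemidef ∧
        (∀ i j : Fin d, Ahat (Sum.inl i) (Sum.inl j) = A i j) ∧
        (∀ i j : Fin d, Bhat (Sum.inl i) (Sum.inl j) = B i j) ∧
        (∀ i : Fin d, Ahat (Sum.inl i) (Sum.inr ()) + Bhat (Sum.inl i) (Sum.inr ()) = b i)) ↔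
      (∃ x y : Fin d → ℝ, A.mulVec x + B.mulVec y = b) := by
  constructor
  · rintro ⟨Ahat, Bhat, hAhat, hBhat, hAblk, hBblk, hsum⟩
    obtain ⟨x, hx⟩ := hAhat.exists_toBlocks₁₁_mulVec_eq_col_toBlocks₁₂ ()
    obtain ⟨y, hy⟩ := hBhat.exists_toBlocks₁₁_mulVec_eq_col_toBlocks₁₂ ()
    have hA₁₁ : Ahat.toBlocks₁₁ = A := ext hAblk
    have hB₁₁ : Bhat.toBlocks₁₁ = B := ext hBblk
    refine ⟨x, y, funext fun i => ?_⟩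
    rw [← hA₁₁, ← hB₁₁, Pi.add_apply, hx, hy]
    exact hsum i
  · rintro ⟨x, y, hxy⟩
    refine ⟨_, _, hA.fromBlocks_mul_mul (replicateCol Unit x),
      hB.fromBlocks_mul_mul (replicateCol Unit y), fun i j => rfl, fun i j => rfl, fun i => ?_⟩
    rw [← hxy]
    rfl
end
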